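/- Let p ≥ 1, B > 0, d ≥ 1, t ≥ 1. Let X_1,…,X_t ∈ ℝ^p satisfy ‖X_s‖₂ ≤ 1 and let Y_1,…,Y_t ∈ ℝ. Consider the blocked strategy consisting of d independent EWA forecasters, each with the uniform prior Q₁ on the closed Euclidean ball B(B+1): for s = i + (k−1)d with i ∈ {1,…,d} and k ≥ 1, the played distribution Q_s has density with respect to Q₁ proportional to exp(−∑_{j=1}^{k−1} ℓ_{i+(j−1)d}(θ)). Then for every θ̄ ∈ ℝ^p with ‖θ̄‖₂ ≤ B, the regret satisfies Regret_t(θ̄) = ∑_{s=1}^t 𝓛_s(Q_s) − ∑_{s=1}^t ℓ_s(θ̄) ≤ (dp/2)·log((B+1)²·e·max(dp, t+d)/(dp)). -/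

import Mathlib

/-!
Each of the `d` forecasters is an EWA forecaster on its own residue class of rounds mod `d`, so the
log loss of round `s` is `log Z_s - log Z_{s+d}` and the cumulative log loss telescopes to
`-∑_{s=t+1}^{t+d} log Z_s`. Each `Z_s` is bounded below by integrating only over the ball of
radius `ε` around `θ̄`: it has prior mass `(ε / (B+1))^p`, on it the average of each loss exceeds
its value at `θ̄` by at most `ε² / 2` (the linear term averages to zero by symmetry), and Jensen's
inequality for `exp` turns this average into a lower bound. Summing over the `d` last indices
gives `∑ ℓ_s(θ̄) + dp log((B+1)/ε) + tε²/2`, and `ε² = dp / max(dp, t+d)` balances the last two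
terms.
-/

open MeasureTheory Metric Finset
open scoped RealInnerProductSpace ENNReal
open Real ProbabilityTheory Module

noncomputable def sqLoss {E : Type*} [NormedAddCommGroup E] [InnerProductSpace ℝ E]
    (x : E) (y : ℝ) (θ : E) : ℝ :=
  1 / 2 * (⟪θ, x⟫ - y) ^ 2

theorem continuous_sqLoss {E : Type*} [NormedAddCommGroup E] [InnerProductSpace ℝ E]
    (x : E) (y : ℝ) : Continuous (sqLoss x y) := by
  unfold sqLoss
  fun_prop

theorem mul_exp_neg_le_setIntegral_exp_neg {α : Type*} [MeasurableSpace α] {μ : Measure α}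
    {S : Set α} {F : α → ℝ} {m : ℝ} (hS0 : μ S ≠ 0) (hS : μ S ≠ ∞) (hF : IntegrableOn F S μ)
    (hexpF : IntegrableOn (fun a => exp (-F a)) S μ) (hm : ∫ a in S, F a ∂μ ≤ μ.real S * m) :
    μ.real S * exp (-m) ≤ ∫ a in S, exp (-F a) ∂μ := by
  have hpos : 0 < μ.real S := ENNReal.toReal_pos hS0 hS
  have jensen := convexOn_exp.map_set_average_le continuousOn_exp isClosed_univ hS0 hS
    (by simp) hF.neg hexpF
  simp only [Pi.neg_apply, setAverage_eq, smul_eq_mul, integral_neg] at jensen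
  have hmean : -m ≤ (μ.real S)⁻¹ * -∫ a in S, F a ∂μ := by
    rw [mul_neg, neg_le_neg_iff, inv_mul_le_iff₀ hpos]
    exact hm
  calc μ.real S * exp (-m) ≤ μ.real S * exp ((μ.real S)⁻¹ * -∫ a in S, F a ∂μ) := by gcongr
    _ ≤ μ.real S * ((μ.real S)⁻¹ * ∫ a in S, exp (-F a) ∂μ) :=
        mul_le_mul_of_nonneg_left jensen hpos.le
    _ = ∫ a in S, exp (-F a) ∂μ := by field_simp

/-- For `s = i + k d` with `1 ≤ i ≤ d`, the sum `f i + f (i + d) + ⋯ + f (s - d)`. -/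
def blockPrefixSum {M : Type*} [AddCommMonoid M] (d : ℕ) (f : ℕ → M) (s : ℕ) : M :=
  ∑ j ∈ range ((s - 1) / d), f ((s - 1) % d + 1 + j * d)

theorem continuous_blockPrefixSum {X M : Type*} [TopologicalSpace X] [TopologicalSpace M]
    [AddCommMonoid M] [ContinuousAdd M] {f : ℕ → X → M} (hf : ∀ r, Continuous (f r)) (d s : ℕ) :
    Continuous fun θ => blockPrefixSum d (fun r => f r θ) s :=
  continuous_finsetSum _ fun _ _ => hf _

section BlockPrefixSum

variable {M : Type*} [AddCommMonoid M] {d s : ℕ} (f : ℕ → M)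

theorem blockPrefixSum_eq_zero (hs : s ≤ d) : blockPrefixSum d f s = 0 := by
  have hdiv : (s - 1) / d = 0 := Nat.div_eq_zero_iff.2 (by omega)
  simp [blockPrefixSum, hdiv]

theorem blockPrefixSum_add_self (hd : 0 < d) (hs : 1 ≤ s) :
    blockPrefixSum d f (s + d) = blockPrefixSum d f s + f s := by
  have hsd : s + d - 1 = s - 1 + d := by omega
  have hlast : (s - 1) % d + 1 + (s - 1) / d * d = s := by
    have := Nat.mod_add_div' (s - 1) d
    omega
  rw [blockPrefixSum, blockPrefixSum, hsd, Nat.add_div_right _ hd, Nat.add_mod_right,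
    sum_range_succ, hlast]

theorem mod_add_one_add_mul_add_le {j : ℕ} (hj : j < (s - 1) / d) :
    (s - 1) % d + 1 + j * d + d ≤ s := by
  have hd : d ≠ 0 := by rintro rfl; simp at hj
  have hdiv := Nat.mod_add_div' (s - 1) d
  have hj' : (j + 1) * d ≤ (s - 1) / d * d := Nat.mul_le_mul_right d hj
  rw [Nat.succ_mul] at hj'
  omega

end BlockPrefixSum

theorem sum_Icc_eq_of_add_eq {M : Type*} [AddCancelCommMonoid M] {d : ℕ} {g f : ℕ → M}
    (hstep : ∀ s, 1 ≤ s → g (s + d) = g s + f s) (hinit : ∀ s ∈ Icc 1 d, g s = 0) (t : ℕ) :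
    ∑ s ∈ Icc (t + 1) (t + d), g s = ∑ s ∈ Icc 1 t, f s := by
  induction t with
  | zero => simpa using sum_eq_zero hinit
  | succ t ih =>
    refine add_left_cancel (a := g (t + 1)) ?_
    calc g (t + 1) + ∑ s ∈ Icc (t + 1 + 1) (t + 1 + d), g s
        = ∑ s ∈ Icc (t + 1) (t + d + 1), g s := by
          rw [Icc_add_one_left_eq_Ioc, add_sum_Ioc_eq_sum_Icc (by omega), Nat.add_right_comm]
      _ = ∑ s ∈ Icc 1 t, f s + (g (t + 1) + f (t + 1)) := by
          rw [sum_Icc_succ_top (by omega), ih, Nat.add_right_comm, hstep _ (by omega)]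
      _ = g (t + 1) + ∑ s ∈ Icc 1 (t + 1), f s := by
          rw [sum_Icc_succ_top (by omega)]
          abel

theorem sum_blockPrefixSum_Icc {M : Type*} [AddCancelCommMonoid M] {d : ℕ} (hd : 0 < d)
    (f : ℕ → M) (t : ℕ) :
    ∑ s ∈ Icc (t + 1) (t + d), blockPrefixSum d f s = ∑ s ∈ Icc 1 t, f s :=
  sum_Icc_eq_of_add_eq (fun _ hs => blockPrefixSum_add_self f hd hs)
    (fun _ hs => blockPrefixSum_eq_zero f (mem_Icc.1 hs).2) t

section Ball

variable {E : Type*} [NormedAddCommGroup E] [InnerProductSpace ℝ E] [FiniteDimensional ℝ E]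
  [MeasurableSpace E] [BorelSpace E] (μ : Measure E) [μ.IsAddHaarMeasure]

/-- The reflection `θ ↦ 2c - θ` preserves `μ` and the ball and changes the sign of the integrand. -/
theorem setIntegral_inner_sub_closedBall_eq_zero (c w : E) (ε : ℝ) :
    ∫ θ in closedBall c ε, ⟪θ - c, w⟫ ∂μ = 0 := by
  set g := (closedBall c ε).indicator fun θ => ⟪θ - c, w⟫
  have hodd : ∀ θ, g (c + c - θ) = -g θ := by
    intro θ
    have hflip : c + c - θ - c = -(θ - c) := by abel
    have hmem : c + c - θ ∈ closedBall c ε ↔ θ ∈ closedBall c ε := by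
      rw [mem_closedBall_iff_norm, mem_closedBall_iff_norm, hflip, norm_neg]
    by_cases hθ : θ ∈ closedBall c ε
    · simp only [g, Set.indicator_of_mem hθ, Set.indicator_of_mem (hmem.2 hθ), hflip,
        inner_neg_left]
    · simp only [g, Set.indicator_of_notMem hθ, Set.indicator_of_notMem (mt hmem.1 hθ), neg_zero]
  have hself := integral_sub_left_eq_self g μ (c + c)
  simp_rw [hodd, integral_neg] at hself
  rw [← integral_indicator measurableSet_closedBall]
  linarith

theorem setIntegral_sqLoss_closedBall_le (c x : E) (y ε : ℝ) :
    ∫ θ in closedBall c ε, sqLoss x y θ ∂μ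
      ≤ μ.real (closedBall c ε) * (sqLoss x y c + ε ^ 2 * ‖x‖ ^ 2 / 2) := by
  set w := (⟪c, x⟫ - y) • x
  have hpt : ∀ θ ∈ closedBall c ε,
      sqLoss x y θ ≤ (sqLoss x y c + ε ^ 2 * ‖x‖ ^ 2 / 2) + ⟪θ - c, w⟫ := by
    intro θ hθ
    have hcs : |⟪θ - c, x⟫| ≤ ε * ‖x‖ := (abs_real_inner_le_norm _ _).trans
      (mul_le_mul_of_nonneg_right (mem_closedBall_iff_norm.1 hθ) (norm_nonneg _))
    have hsq : ⟪θ - c, x⟫ ^ 2 ≤ (ε * ‖x‖) ^ 2 := sq_le_sq' (abs_le.1 hcs).1 (abs_le.1 hcs).2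
    have hsplit : ⟪θ, x⟫ = ⟪c, x⟫ + ⟪θ - c, x⟫ := by rw [inner_sub_left]; ring
    simp only [sqLoss, w, real_inner_smul_right, hsplit]
    nlinarith
  have hball := isCompact_closedBall c ε
  have hlin : IntegrableOn (fun θ => ⟪θ - c, w⟫) (closedBall c ε) μ :=
    (by fun_prop : Continuous fun θ => ⟪θ - c, w⟫).continuousOn.integrableOn_compact hball
  calc ∫ θ in closedBall c ε, sqLoss x y θ ∂μ
      ≤ ∫ θ in closedBall c ε, ((sqLoss x y c + ε ^ 2 * ‖x‖ ^ 2 / 2) + ⟪θ - c, w⟫) ∂μ :=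
        setIntegral_mono_on ((continuous_sqLoss x y).continuousOn.integrableOn_compact hball)
          ((integrableOn_const measure_closedBall_lt_top.ne).add hlin) measurableSet_closedBall hpt
    _ = μ.real (closedBall c ε) * (sqLoss x y c + ε ^ 2 * ‖x‖ ^ 2 / 2) := by
        rw [integral_add (integrableOn_const measure_closedBall_lt_top.ne).integrable hlin,
          setIntegral_const,
          setIntegral_inner_sub_closedBall_eq_zero, smul_eq_mul, add_zero]

theorem setIntegral_sum_sqLoss_closedBall_le {ι : Type*} (s : Finset ι) (x : ι → E) (y : ι → ℝ)
    (hx : ∀ j ∈ s, ‖x j‖ ≤ 1) (c : E) (ε : ℝ) :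
    ∫ θ in closedBall c ε, ∑ j ∈ s, sqLoss (x j) (y j) θ ∂μ
      ≤ μ.real (closedBall c ε) * ∑ j ∈ s, (sqLoss (x j) (y j) c + ε ^ 2 / 2) := by
  rw [integral_finsetSum _ fun j _ =>
    (continuous_sqLoss _ _).continuousOn.integrableOn_compact (isCompact_closedBall c ε), mul_sum]
  gcongr with j hj
  refine (setIntegral_sqLoss_closedBall_le μ c (x j) (y j) ε).trans ?_
  have hx2 : ‖x j‖ ^ 2 ≤ 1 := pow_le_one₀ (norm_nonneg _) (hx j hj)
  gcongr
  nlinarith [sq_nonneg ε]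

theorem neg_log_integral_exp_neg_sum_sqLoss_le {ι : Type*} (s : Finset ι) (x : ι → E)
    (y : ι → ℝ) (hx : ∀ j ∈ s, ‖x j‖ ≤ 1) {c : E} {ε R : ℝ} (hε : 0 < ε) (hcR : ‖c‖ + ε ≤ R) :
    -log (∫ θ, exp (-∑ j ∈ s, sqLoss (x j) (y j) θ) ∂μ[|closedBall 0 R])
      ≤ ∑ j ∈ s, (sqLoss (x j) (y j) c + ε ^ 2 / 2) + finrank ℝ E * log (R / ε) := by
  set F := fun θ => ∑ j ∈ s, sqLoss (x j) (y j) θ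
  set m := ∑ j ∈ s, (sqLoss (x j) (y j) c + ε ^ 2 / 2)
  have hR : 0 < R := by linarith [norm_nonneg c]
  have hF : Continuous F := continuous_finsetSum _ fun j _ => continuous_sqLoss _ _
  have hexpF : Continuous fun θ => exp (-F θ) := by fun_prop
  have hJensen : μ.real (closedBall c ε) * exp (-m) ≤ ∫ θ in closedBall c ε, exp (-F θ) ∂μ :=
    mul_exp_neg_le_setIntegral_exp_neg (measure_closedBall_pos μ c hε).ne'
      measure_closedBall_lt_top.ne (hF.continuousOn.integrableOn_compact (isCompact_closedBall _ _))
      (hexpF.continuousOn.integrableOn_compact (isCompact_closedBall _ _))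
      (setIntegral_sum_sqLoss_closedBall_le μ s x y hx c ε)
  have hsubset : ∫ θ in closedBall c ε, exp (-F θ) ∂μ ≤ ∫ θ in closedBall 0 R, exp (-F θ) ∂μ :=
    setIntegral_mono_set (hexpF.continuousOn.integrableOn_compact (isCompact_closedBall _ _))
      (ae_of_all _ fun θ => (exp_pos _).le)
      (closedBall_subset_closedBall' (by rwa [dist_zero_right, add_comm])).eventuallyLE
  have hvol : μ.real (closedBall c ε) = (ε / R) ^ finrank ℝ E * μ.real (closedBall 0 R) := by
    rw [Measure.addHaar_real_closedBall' μ c hε.le, Measure.addHaar_real_closedBall' μ 0 hR.le,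
      div_pow]
    field_simp
  have hcond : ∫ θ, exp (-F θ) ∂μ[|closedBall 0 R]
      = (μ.real (closedBall 0 R))⁻¹ * ∫ θ in closedBall 0 R, exp (-F θ) ∂μ := by
    rw [ProbabilityTheory.cond, integral_smul_measure, ENNReal.toReal_inv, smul_eq_mul,
      measureReal_def]
  have hlower : (ε / R) ^ finrank ℝ E * exp (-m) ≤ ∫ θ, exp (-F θ) ∂μ[|closedBall 0 R] := by
    have hball : 0 < μ.real (closedBall 0 R) :=
      ENNReal.toReal_pos (measure_closedBall_pos μ 0 hR).ne' measure_closedBall_lt_top.ne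
    rw [hcond, le_inv_mul_iff₀ hball, ← mul_assoc, mul_comm _ ((ε / R) ^ _), ← hvol]
    exact hJensen.trans hsubset
  have hlog := log_le_log (by positivity) hlower
  rw [log_mul (by positivity) (exp_pos _).ne', log_exp, log_pow, log_div hε.ne' hR.ne'] at hlog
  rw [log_div hR.ne' hε.ne']
  linarith

theorem Continuous.integrable_cond_closedBall {f : E → ℝ} (hf : Continuous f) (c : E) {R : ℝ}
    (hR : 0 < R) : Integrable f μ[|closedBall c R] :=
  (hf.continuousOn.integrableOn_compact (isCompact_closedBall c R)).smul_measure
    (ENNReal.inv_ne_top.2 (measure_closedBall_pos μ c hR).ne')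

theorem neg_log_integral_exp_neg_blockPrefixSum_sqLoss_le (X : ℕ → E) (Y : ℕ → ℝ) {d s t : ℕ}
    (hX : ∀ r ∈ Icc 1 t, ‖X r‖ ≤ 1) (hs : s ≤ t + d) {c : E} {ε R : ℝ} (hε : 0 < ε)
    (hcR : ‖c‖ + ε ≤ R) :
    -log (∫ θ, exp (-blockPrefixSum d (fun r => sqLoss (X r) (Y r) θ) s) ∂μ[|closedBall 0 R])
      ≤ blockPrefixSum d (fun r => sqLoss (X r) (Y r) c + ε ^ 2 / 2) s
        + finrank ℝ E * log (R / ε) := by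
  refine neg_log_integral_exp_neg_sum_sqLoss_le μ _ _ _ (fun j hj => hX _ ?_) hε hcR
  have := mod_add_one_add_mul_add_le (mem_range.1 hj)
  exact mem_Icc.2 ⟨by omega, by omega⟩

end Ball

theorem sum_neg_log_integral_exp_neg_tilted {α : Type*} [MeasurableSpace α] (ν : Measure α)
    [IsProbabilityMeasure ν] {d : ℕ} {ℓ W : ℕ → α → ℝ}
    (hW : ∀ s, Integrable (fun θ => exp (-W s θ)) ν)
    (hstep : ∀ s, 1 ≤ s → ∀ θ, W (s + d) θ = W s θ + ℓ s θ)
    (hinit : ∀ s ∈ Icc 1 d, ∀ θ, W s θ = 0) (t : ℕ) :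
    ∑ s ∈ Icc 1 t, -log (∫ θ, exp (-ℓ s θ) ∂ν.tilted fun θ => -W s θ)
      = -∑ s ∈ Icc (t + 1) (t + d), log (∫ θ, exp (-W s θ) ∂ν) := by
  set L := fun s => log (∫ θ, exp (-W s θ) ∂ν)
  have hround : ∀ s ∈ Icc 1 t,
      -log (∫ θ, exp (-ℓ s θ) ∂ν.tilted fun θ => -W s θ) = -(L (s + d) - L s) := by
    intro s hs
    simp only [integral_exp_tilted, Pi.add_apply, ← neg_add, ← hstep s (mem_Icc.1 hs).1]
    rw [log_div (integral_exp_pos (hW _)).ne' (integral_exp_pos (hW s)).ne']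
  rw [sum_congr rfl hround, sum_neg_distrib, sum_Icc_eq_of_add_eq (g := L)
    (fun s _ => (add_sub_cancel _ _).symm) (fun s hs => by simp [L, hinit s hs]) t]

theorem exists_mul_log_div_add_mul_sq_le {n T M R : ℝ} (hn : 0 < n) (hnM : n ≤ M) (hTM : T ≤ M)
    (hR : 0 < R) :
    ∃ ε, 0 < ε ∧ ε ≤ 1 ∧
      n * log (R / ε) + T * (ε ^ 2 / 2) ≤ n / 2 * log (R ^ 2 * exp 1 * M / n) := by
  have hM : 0 < M := hn.trans_le hnM
  refine ⟨√(n / M), by positivity, sqrt_le_one.2 ((div_le_one hM).2 hnM), ?_⟩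
  have hsq : √(n / M) ^ 2 = n / M := sq_sqrt (by positivity)
  have harg : R ^ 2 * exp 1 * M / n = (R / √(n / M)) ^ 2 * exp 1 := by
    rw [div_pow, hsq]
    field_simp
  have hT : T * (n / M) ≤ n :=
    (mul_le_mul_of_nonneg_right hTM (by positivity)).trans_eq (by field_simp)
  rw [harg, log_mul (by positivity) (exp_pos _).ne', log_pow, log_exp, hsq]
  push_cast
  linarith

theorem blocked_ewa_regret_bound_general
    (p d t : ℕ) (hp : 1 ≤ p) (hd : 1 ≤ d) (B : ℝ)
    (X : ℕ → EuclideanSpace ℝ (Fin p)) (hX : ∀ s ∈ Finset.Icc 1 t, ‖X s‖ ≤ 1)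
    (Y : ℕ → ℝ)
    (ℓ : ℕ → EuclideanSpace ℝ (Fin p) → ℝ)
    (hℓ : ∀ s θ, ℓ s θ = (1/2) * (⟪θ, X s⟫ - Y s)^2)
    (Q₁ : Measure (EuclideanSpace ℝ (Fin p)))
    (hQ₁ : Q₁ = (volume (closedBall (0 : EuclideanSpace ℝ (Fin p)) (B+1)))⁻¹ •
        volume.restrict (closedBall (0 : EuclideanSpace ℝ (Fin p)) (B+1)))
    -- the cumulative loss of the block containing round `s`, before round `s`
    (W : ℕ → EuclideanSpace ℝ (Fin p) → ℝ)
    (hW : ∀ s θ, W s θ = ∑ j ∈ Finset.range ((s-1)/d), ℓ ((s-1) % d + 1 + j*d) θ)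
    -- normalising constants and the played distributions
    (Z : ℕ → ℝ) (hZ : ∀ s, Z s = ∫ θ, Real.exp (-(W s θ)) ∂Q₁)
    (Q : ℕ → Measure (EuclideanSpace ℝ (Fin p)))
    (hQ : ∀ s, Q s = Q₁.withDensity (fun θ => ENNReal.ofReal (Real.exp (-(W s θ)) / Z s)))
    (θbar : EuclideanSpace ℝ (Fin p)) (hθbar : ‖θbar‖ ≤ B) :
    (∑ s ∈ Finset.Icc 1 t, -Real.log (∫ θ, Real.exp (-(ℓ s θ)) ∂(Q s)))
        - ∑ s ∈ Finset.Icc 1 t, ℓ s θbar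
      ≤ ((d : ℝ) * p / 2) *
          Real.log ((B+1)^2 * Real.exp 1 * max ((d : ℝ) * p) ((t : ℝ) + d) / ((d : ℝ) * p)) := by
  have hB : 0 < B + 1 := by linarith [norm_nonneg θbar]
  obtain ⟨ε, hε, hε1, htradeoff⟩ := exists_mul_log_div_add_mul_sq_le (T := t) (R := B + 1)
    (M := max ((d : ℝ) * p) ((t : ℝ) + d)) (by positivity) (le_max_left _ _)
    (le_max_of_le_right (le_add_of_nonneg_right d.cast_nonneg)) hB
  obtain rfl : ℓ = fun r => sqLoss (X r) (Y r) := funext₂ hℓ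
  obtain rfl : Z = fun s => ∫ θ, exp (-W s θ) ∂Q₁ := funext hZ
  obtain rfl : Q = fun s => Q₁.tilted fun θ => -W s θ := funext hQ
  obtain rfl : W = fun s θ => blockPrefixSum d (fun r => sqLoss (X r) (Y r) θ) s := funext₂ hW
  obtain rfl : Q₁ = volume[|closedBall 0 (B + 1)] := hQ₁
  have : IsProbabilityMeasure volume[|closedBall (0 : EuclideanSpace ℝ (Fin p)) (B + 1)] :=
    cond_isProbabilityMeasure_of_finite (measure_closedBall_pos _ _ hB).ne'
      measure_closedBall_lt_top.ne
  beta_reduce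
  rw [sum_neg_log_integral_exp_neg_tilted _
    (fun s => (continuous_blockPrefixSum (fun r => continuous_sqLoss (X r) (Y r)) d s).neg.rexp
      |>.integrable_cond_closedBall volume 0 hB)
    (fun s hs θ => blockPrefixSum_add_self _ hd hs)
    (fun s hs θ => blockPrefixSum_eq_zero _ (mem_Icc.1 hs).2)]
  calc _ ≤ ∑ s ∈ Icc (t + 1) (t + d),
          (blockPrefixSum d (fun r => sqLoss (X r) (Y r) θbar + ε ^ 2 / 2) s
            + p * log ((B + 1) / ε)) - ∑ s ∈ Icc 1 t, sqLoss (X s) (Y s) θbar := by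
        rw [← sum_neg_distrib]
        gcongr with s hs
        simpa only [finrank_euclideanSpace_fin] using
          neg_log_integral_exp_neg_blockPrefixSum_sqLoss_le volume X Y hX (mem_Icc.1 hs).2 hε
            (by linarith : ‖θbar‖ + ε ≤ B + 1)
    _ = d * p * log ((B + 1) / ε) + t * (ε ^ 2 / 2) := by
        rw [sum_add_distrib, sum_blockPrefixSum_Icc hd, sum_add_distrib]
        simp only [sum_const, Nat.card_Icc, Nat.reduceSubDiff, add_tsub_cancel_left,
          add_tsub_cancel_right, nsmul_eq_mul]
        ring
    _ ≤ _ := htradeoff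

theorem blocked_ewa_regret_bound
    (p d t : ℕ) (hp : 1 ≤ p) (hd : 1 ≤ d) (ht : 1 ≤ t) (B : ℝ) (hB : 0 < B)
    (X : ℕ → EuclideanSpace ℝ (Fin p)) (hX : ∀ s ∈ Finset.Icc 1 t, ‖X s‖ ≤ 1)
    (Y : ℕ → ℝ)
    (ℓ : ℕ → EuclideanSpace ℝ (Fin p) → ℝ)
    (hℓ : ∀ s θ, ℓ s θ = (1/2) * (⟪θ, X s⟫ - Y s)^2)
    (Q₁ : Measure (EuclideanSpace ℝ (Fin p)))
    (hQ₁ : Q₁ = (volume (closedBall (0 : EuclideanSpace ℝ (Fin p)) (B+1)))⁻¹ •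
        volume.restrict (closedBall (0 : EuclideanSpace ℝ (Fin p)) (B+1)))
    -- the cumulative loss of the block containing round `s`, before round `s`
    (W : ℕ → EuclideanSpace ℝ (Fin p) → ℝ)
    (hW : ∀ s θ, W s θ = ∑ j ∈ Finset.range ((s-1)/d), ℓ ((s-1) % d + 1 + j*d) θ)
    -- normalising constants and the played distributions
    (Z : ℕ → ℝ) (hZ : ∀ s, Z s = ∫ θ, Real.exp (-(W s θ)) ∂Q₁)
    (Q : ℕ → Measure (EuclideanSpace ℝ (Fin p)))
    (hQ : ∀ s, Q s = Q₁.withDensity (fun θ => ENNReal.ofReal (Real.exp (-(W s θ)) / Z s)))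
    (θbar : EuclideanSpace ℝ (Fin p)) (hθbar : ‖θbar‖ ≤ B) :
    (∑ s ∈ Finset.Icc 1 t, -Real.log (∫ θ, Real.exp (-(ℓ s θ)) ∂(Q s)))
        - ∑ s ∈ Finset.Icc 1 t, ℓ s θbar
      ≤ ((d : ℝ) * p / 2) *
          Real.log ((B+1)^2 * Real.exp 1 * max ((d : ℝ) * p) ((t : ℝ) + d) / ((d : ℝ) * p)) :=
  blocked_ewa_regret_bound_general p d t hp hd B X hX Y ℓ hℓ Q₁ hQ₁ W hW Z hZ Q hQ θbar hθbar
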